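/- arXiv:2405.14500 — 4 statements merged into one kernel-verified Lean document; each statement's English description precedes it below -/
import Mathlib

section
/- Let p be a prime number, λ₁ = (p + √(p²+16))/(4p), λ₂ = (p − √(p²+16))/(4p). Let (β_i)_{i≥0} be a sequence of integers, with β₀ and β₁ not both zero, satisfying |β_{i+1}| < (1/p²)|β_{i−1}| + (1/2)|β_i| for all i ≥ 1. Set C = 2|β₁|/(λ₁ − λ₂) + |β₀| and N = ⌊ −log C / log λ₁ ⌋. Then β_n = 0 for every n > N; in particular the set of indices n with β_n ≠ 0 is finite with at most N + 1 elements. -/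
/-!
λ₁ is the positive root of X² = X/2 + 1/p², so the majorant n ↦ C λ₁ⁿ satisfies the
recurrence with equality; the choice of C makes it dominate |β₀| and |β₁| (using
λ₁ + λ₂ = 1/2), and then two-step induction gives |β_n| ≤ C λ₁ⁿ for all n. Since
0 < λ₁ < 1, C λ₁ⁿ < 1 exactly when n > −log C / log λ₁, and an integer of absolute
value < 1 vanishes.
-/

open Real

theorem le_mul_pow_of_le_two_step {u : ℕ → ℝ} {a c l K : ℝ} (ha : 0 ≤ a) (hc : 0 ≤ c)
    (hl : l ^ 2 = a + c * l) (h0 : u 0 ≤ K) (h1 : u 1 ≤ K * l)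
    (hrec : ∀ k, u (k + 2) ≤ a * u k + c * u (k + 1)) (n : ℕ) : u n ≤ K * l ^ n := by
  induction n using Nat.twoStepInduction with
  | zero => simpa using h0
  | one => simpa using h1
  | more k ih ih' =>
    calc u (k + 2) ≤ a * u k + c * u (k + 1) := hrec k
      _ ≤ a * (K * l ^ k) + c * (K * l ^ (k + 1)) := by gcongr
      _ = K * l ^ (k + 2) := by linear_combination (-(K * l ^ k)) * hl

section Roots

variable {p : ℝ}

theorem sq_lam_one (hp : p ≠ 0) :
    ((p + √(p ^ 2 + 16)) / (4 * p)) ^ 2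
      = 1 / p ^ 2 + 1 / 2 * ((p + √(p ^ 2 + 16)) / (4 * p)) := by
  have hs : √(p ^ 2 + 16) ^ 2 = p ^ 2 + 16 := sq_sqrt (by positivity)
  field_simp
  linear_combination 2 * hs

theorem lam_one_pos (hp : 0 < p) : 0 < (p + √(p ^ 2 + 16)) / (4 * p) := by positivity

theorem lam_one_lt_one (hp : 0 < p) (hp2 : 2 < p ^ 2) : (p + √(p ^ 2 + 16)) / (4 * p) < 1 := by
  have hs : √(p ^ 2 + 16) ^ 2 = p ^ 2 + 16 := sq_sqrt (by positivity)
  have : √(p ^ 2 + 16) < 3 * p := by nlinarith [sqrt_nonneg (p ^ 2 + 16)]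
  rw [div_lt_one (by positivity)]
  linarith

theorem lam_two_lt_lam_one (hp : 0 < p) :
    (p - √(p ^ 2 + 16)) / (4 * p) < (p + √(p ^ 2 + 16)) / (4 * p) := by
  have : 0 < √(p ^ 2 + 16) := sqrt_pos.mpr (by positivity)
  gcongr
  linarith

theorem lam_one_add_lam_two (hp : p ≠ 0) :
    (p + √(p ^ 2 + 16)) / (4 * p) + (p - √(p ^ 2 + 16)) / (4 * p) = 1 / 2 := by
  field_simp
  ring

end Roots

theorem abs_le_majorant_mul {x y l₁ l₂ : ℝ} (hlt : l₂ < l₁) (hsum : 0 ≤ l₁ + l₂) :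
    |x| ≤ (2 * |x| / (l₁ - l₂) + |y|) * l₁ := by
  have hd : 0 < l₁ - l₂ := sub_pos.mpr hlt
  have h2 : |x| ≤ 2 * |x| / (l₁ - l₂) * l₁ := by
    rw [div_mul_eq_mul_div, le_div_iff₀ hd]
    nlinarith [abs_nonneg x]
  nlinarith [abs_nonneg y]

theorem majorant_pos {x y d : ℝ} (hd : 0 < d) (hxy : ¬(y = 0 ∧ x = 0)) :
    0 < 2 * |x| / d + |y| := by
  by_cases hy : y = 0
  · have hx : x ≠ 0 := fun hx => hxy ⟨hy, hx⟩
    have : 0 < |x| := abs_pos.mpr hx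
    positivity
  · have : 0 < |y| := abs_pos.mpr hy
    positivity

theorem mul_pow_lt_one_of_floor_lt {K l : ℝ} {n : ℕ} (hK : 0 < K) (hl0 : 0 < l) (hl1 : l < 1)
    (hn : ⌊-log K / log l⌋ < (n : ℤ)) : K * l ^ n < 1 := by
  have hlog : log l < 0 := log_neg hl0 hl1
  have hlt : -log K / log l < n :=
    (Int.lt_floor_add_one _).trans_le (by exact_mod_cast hn)
  rw [div_lt_iff_of_neg hlog] at hlt
  rw [← log_neg_iff (by positivity), log_mul hK.ne' (by positivity), log_pow]
  linarith

theorem int_eq_zero_of_abs_le_lt_one {z : ℤ} {r : ℝ} (hz : |(z : ℝ)| ≤ r) (hr : r < 1) :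
    z = 0 :=
  Int.abs_lt_one_iff.mp (by exact_mod_cast hz.trans_lt hr)

theorem Set.finite_and_ncard_le_of_forall_le {P : ℕ → Prop} {N : ℤ}
    (hP : ∀ n, P n → (n : ℤ) ≤ N) (hN : 0 ≤ N + 1) :
    {n | P n}.Finite ∧ ({n | P n}.ncard : ℤ) ≤ N + 1 := by
  have hsub : {n | P n} ⊆ ↑(Finset.range (N + 1).toNat) := fun n hn => by
    have := hP n hn
    simp only [Finset.coe_range, Set.mem_Iio]
    omega
  refine ⟨(Finset.range _).finite_toSet.subset hsub, ?_⟩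
  have := Set.ncard_le_ncard hsub (Finset.range _).finite_toSet
  rw [Set.ncard_coe_finset, Finset.card_range] at this
  omega

/-- The `p`-adic Lamé theorem for Browkin continued fractions: if `(β_i)` is an
integer sequence, not vanishing in both of its first two terms, satisfying
`|β_{i+1}| < (1/p²)|β_{i−1}| + (1/2)|β_i|` for all `i ≥ 1`, then with
`C = 2|β₁|/(λ₁−λ₂) + |β₀|` and `N = ⌊−log C / log λ₁⌋` one has `β_n = 0` for all
`n > N`; in particular `{n | β_n ≠ 0}` is finite with at most `N + 1` elements. -/
theorem stmt_7 (p : ℕ) (hp : p.Prime)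
    (lam1 lam2 : ℝ)
    (hlam1 : lam1 = ((p : ℝ) + Real.sqrt ((p : ℝ)^2 + 16)) / (4 * p))
    (hlam2 : lam2 = ((p : ℝ) - Real.sqrt ((p : ℝ)^2 + 16)) / (4 * p))
    (β : ℕ → ℤ) (hβ0 : ¬(β 0 = 0 ∧ β 1 = 0))
    (hβ : ∀ i : ℕ, 1 ≤ i →
      |(β (i + 1) : ℝ)| < (1/(p : ℝ)^2) * |(β (i - 1) : ℝ)| + (1/2) * |(β i : ℝ)|)
    (C : ℝ) (hC : C = 2 * |(β 1 : ℝ)| / (lam1 - lam2) + |(β 0 : ℝ)|)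
    (N : ℤ) (hN : N = ⌊-Real.log C / Real.log lam1⌋) :
    (∀ n : ℕ, N < (n : ℤ) → β n = 0) ∧
    {n : ℕ | β n ≠ 0}.Finite ∧ ({n : ℕ | β n ≠ 0}.ncard : ℤ) ≤ N + 1 := by
  have hp0 : (0 : ℝ) < p := by exact_mod_cast hp.pos
  have hp2 : (2 : ℝ) < (p : ℝ) ^ 2 := by
    have : (2 : ℝ) ≤ p := by exact_mod_cast hp.two_le
    nlinarith
  have hlt : lam2 < lam1 := hlam1 ▸ hlam2 ▸ lam_two_lt_lam_one hp0
  have hl0 : 0 < lam1 := hlam1 ▸ lam_one_pos hp0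
  have hl1 : lam1 < 1 := hlam1 ▸ lam_one_lt_one hp0 hp2
  have hC0 : 0 < C := hC ▸ majorant_pos (sub_pos.mpr hlt) (by exact_mod_cast hβ0)
  have hbound (n : ℕ) : |(β n : ℝ)| ≤ C * lam1 ^ n := by
    refine le_mul_pow_of_le_two_step (u := fun n => |(β n : ℝ)|) (by positivity) (by norm_num)
      (hlam1 ▸ sq_lam_one hp0.ne') ?_ ?_ (fun k => (hβ (k + 1) (by omega)).le) n
    · simpa [hC] using div_nonneg (by positivity) (sub_pos.mpr hlt).le
    · rw [hC]
      refine abs_le_majorant_mul hlt ?_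
      rw [hlam1, hlam2, lam_one_add_lam_two hp0.ne']
      norm_num
  have hvanish (n : ℕ) (hn : N < n) : β n = 0 :=
    int_eq_zero_of_abs_le_lt_one (hbound n) (mul_pow_lt_one_of_floor_lt hC0 hl0 hl1 (hN ▸ hn))
  have hN1 : 0 ≤ N + 1 := by
    by_contra! h
    exact hβ0 ⟨hvanish 0 (by omega), hvanish 1 (by omega)⟩
  exact ⟨hvanish,
    Set.finite_and_ncard_le_of_forall_le (fun n hn => not_lt.mp (mt (hvanish n) hn)) hN1⟩
end

section
/- Let p be an odd prime, λ an integer with 1 ≤ λ ≤ p−1, α a positive integer with (λ, α) ≠ (p−1, 1), T₁ = (λ − √(λ²+4p^α))/2, T₂ = (λ + √(λ²+4p^α))/2, and define (U_n), (W_n) by U₀ = 1, U₁ = λ, W₀ = 0, W₁ = 1 and u_{n+1} = λ·u_n + p^α·u_{n−1} for n ≥ 1. For k ≥ 1 set a = U_k − p^α·U_{k−1} and b = W_k − p^α·W_{k−1}. Then (T₂ − p^α)(a − b·T₂) ≠ 0 and (T₂/T₁)^{k−1} = ( (T₁ − p^α)(a − b·T₁) ) / ( (T₂ − p^α)(a −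 b·T₂) ). -/
/-- With `(λ, α) ≠ (p−1, 1)`, `a = U_k − p^α U_{k−1}` and `b = W_k − p^α W_{k−1}`
for `k ≥ 1`, one has `(T₂ − p^α)(a − bT₂) ≠ 0` and
`(T₂/T₁)^{k−1} = ((T₁ − p^α)(a − bT₁))/((T₂ − p^α)(a − bT₂))`. -/
theorem stmt_12 (p : ℕ) (hp : p.Prime) (hodd : Odd p)
    (lam : ℤ) (hlam : 1 ≤ lam ∧ lam ≤ (p : ℤ) - 1) (α : ℕ) (hα : 1 ≤ α)
    (hne : ¬(lam = (p : ℤ) - 1 ∧ α = 1))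
    (T1 T2 : ℝ)
    (hT1 : T1 = ((lam : ℝ) - Real.sqrt ((lam : ℝ)^2 + 4 * (p : ℝ)^α)) / 2)
    (hT2 : T2 = ((lam : ℝ) + Real.sqrt ((lam : ℝ)^2 + 4 * (p : ℝ)^α)) / 2)
    (U W : ℕ → ℝ)
    (hU0 : U 0 = 1) (hU1 : U 1 = (lam : ℝ))
    (hW0 : W 0 = 0) (hW1 : W 1 = 1)
    (hUrec : ∀ n : ℕ, 1 ≤ n → U (n + 1) = (lam : ℝ) * U n + (p : ℝ)^α * U (n - 1))
    (hWrec : ∀ n : ℕ, 1 ≤ n → W (n + 1) = (lam : ℝ) * W n + (p : ℝ)^α * W (n - 1))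
    (k : ℕ) (hk : 1 ≤ k) (a b : ℝ)
    (ha : a = U k - (p : ℝ)^α * U (k - 1))
    (hb : b = W k - (p : ℝ)^α * W (k - 1)) :
    (T2 - (p : ℝ)^α) * (a - b * T2) ≠ 0 ∧
    (T2 / T1) ^ (k - 1) =
      ((T1 - (p : ℝ)^α) * (a - b * T1)) / ((T2 - (p : ℝ)^α) * (a - b * T2)) := by
  set P : ℝ := (p : ℝ)^α with hPdef
  have hppos : (0:ℝ) < p := by exact_mod_cast hp.pos
  have hPpos : 0 < P := pow_pos hppos α
  have hlam1 : (1:ℝ) ≤ (lam:ℝ) := by exact_mod_cast hlam.1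
  set D := Real.sqrt ((lam : ℝ)^2 + 4 * P) with hDdef
  have hD2 : D^2 = (lam:ℝ)^2 + 4*P := Real.sq_sqrt (by positivity)
  have hDnn : 0 ≤ D := Real.sqrt_nonneg _
  have hDgt : (lam:ℝ) < D := by nlinarith
  have hT1neg : T1 < 0 := by rw [hT1]; linarith
  have hT2pos : 0 < T2 := by rw [hT2]; linarith
  have hsum : T1 + T2 = (lam:ℝ) := by rw [hT1, hT2]; ring
  have hprod : T1 * T2 = -P := by
    rw [hT1, hT2]; linear_combination (-1/4 : ℝ) * hD2
  have hT2root : T2^2 = (lam:ℝ)*T2 + P := by linear_combination T2*hsum - hprod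
  have hT1ne : T1 ≠ 0 := ne_of_lt hT1neg
  have hT1Pne : T1 - P ≠ 0 := by intro h; nlinarith
  have hT2ne : T2 ≠ P := by
    intro h
    have hProot : (P - ((lam:ℝ) + 1)) * P = 0 := by
      have := hT2root; rw [h] at this; linear_combination this
    have hPlam : P = (lam:ℝ) + 1 := by
      rcases mul_eq_zero.mp hProot with h1 | h1
      · linarith
      · exact absurd h1 (ne_of_gt hPpos)
    have hZ : (p:ℤ)^α = lam + 1 := by
      have h' : ((p:ℝ))^α = (lam:ℝ) + 1 := hPlam
      exact_mod_cast h'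
    have hple : (p:ℤ) ≤ (p:ℤ)^α :=
      le_self_pow₀ (by exact_mod_cast hp.one_lt.le) (by omega)
    have hpe : (p:ℤ)^α = (p:ℤ)^1 := by
      have h2 := hlam.2; rw [pow_one]; omega
    have hα1 : α = 1 := by
      have hN : p^α = p^1 := by exact_mod_cast hpe
      exact Nat.pow_right_injective hp.two_le hN
    apply hne
    refine ⟨?_, hα1⟩
    rw [hα1] at hZ; push_cast at hZ ⊢; omega
  have hT2Pne : T2 - P ≠ 0 := sub_ne_zero.mpr hT2ne
  -- U n = W (n+1)
  have hUW : ∀ n, U n = W (n+1) ∧ U (n+1) = W (n+2) := by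
    intro n
    induction n with
    | zero =>
      refine ⟨by rw [hU0, hW1], ?_⟩
      rw [hU1, hWrec 1 le_rfl]
      norm_num [hW0, hW1]
    | succ n ih =>
      refine ⟨ih.2, ?_⟩
      rw [hUrec (n+1) (by omega), hWrec (n+2) (by omega)]
      simp only [Nat.add_sub_cancel]
      rw [ih.1, ih.2]
      norm_num
  -- Binet-type identity
  have key : ∀ (r s : ℝ), r + s = (lam:ℝ) → r * s = -P →
      ∀ n, W (n+1) - s * W n = r ^ n ∧ W (n+2) - s * W (n+1) = r ^ (n+1) := by
    intro r s hrs hrsP n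
    induction n with
    | zero =>
      have h2 : W 2 = (lam:ℝ) * W 1 + P * W 0 := hWrec 1 le_rfl
      rw [hW0, hW1] at h2
      constructor
      · norm_num [hW0, hW1]
      · show W 2 - s * W 1 = r ^ 1
        rw [h2, hW1, pow_one]; linarith
    | succ n ih =>
      refine ⟨ih.2, ?_⟩
      rw [show n+1+2 = (n+2)+1 from rfl, hWrec (n+2) (by omega)]
      simp only [show n+2-1 = n+1 from rfl]
      linear_combination r * ih.2 - W (n+2) * hrs + W (n+1) * hrsP
  obtain ⟨m, rfl⟩ : ∃ m, k = m + 1 := ⟨k - 1, by omega⟩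
  have habT2 : a - b * T2 = T1 ^ m * (T1 - P) := by
    rw [ha, hb, Nat.add_sub_cancel, (hUW m).1, (hUW m).2]
    have h1 := (key T1 T2 hsum hprod m).1
    have h2 := (key T1 T2 hsum hprod m).2
    linear_combination h2 - P * h1
  have habT1 : a - b * T1 = T2 ^ m * (T2 - P) := by
    rw [ha, hb, Nat.add_sub_cancel, (hUW m).1, (hUW m).2]
    have h1 := (key T2 T1 (by linarith) (by linarith [hprod, mul_comm T1 T2]) m).1
    have h2 := (key T2 T1 (by linarith) (by linarith [hprod, mul_comm T1 T2]) m).2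
    linear_combination h2 - P * h1
  constructor
  · rw [habT2]
    exact mul_ne_zero hT2Pne (mul_ne_zero (pow_ne_zero m hT1ne) hT1Pne)
  · rw [Nat.add_sub_cancel, div_pow, habT1, habT2,
      div_eq_div_iff (pow_ne_zero m hT1ne)
        (mul_ne_zero hT2Pne (mul_ne_zero (pow_ne_zero m hT1ne) hT1Pne))]
    ring
end

section
/- Let p be an odd prime, λ an integer with 1 ≤ λ ≤ p−1, α a positive integer with (λ, α) ≠ (p−1, 1), T₁ = (λ − √(λ²+4p^α))/2, T₂ = (λ + √(λ²+4p^α))/2, and define (U_n), (W_n) by U₀ = 1, U₁ = λ, W₀ = 0, W₁ = 1 and u_{n+1} = λ·u_n + p^α·u_{n−1} for n ≥ 1. For k ≥ 1 set a = U_k − p^α·U_{k−1}, b = W_k − p^α·W_{k−1}, and θ = ( (T₁ − p^α)(a − b·T₁) ) / ( (T₂ − p^α)(a − b·T₂) ). Then k = ⌊ ln|θ| / ln|T₂/T₁| ⌋ + 1; that is, the length of the non-stationary part of the Schneider continued fraction of a/b, all of whose non-stationary partial quotient pairs equal (λ, α), is recovered from a and b by this formula. -/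
set_option maxHeartbeats 1000000 in
/-- Length of the non-stationary part of a Schneider continued fraction all of
whose non-stationary partial quotient pairs equal `(λ, α) ≠ (p−1, 1)`: with
`a = U_k − p^α U_{k−1}`, `b = W_k − p^α W_{k−1}` and
`θ = ((T₁ − p^α)(a − bT₁))/((T₂ − p^α)(a − bT₂))`, one has
`k = ⌊ln|θ| / ln|T₂/T₁|⌋ + 1`. -/
theorem stmt_13 (p : ℕ) (hp : p.Prime) (hodd : Odd p)
    (lam : ℤ) (hlam : 1 ≤ lam ∧ lam ≤ (p : ℤ) - 1) (α : ℕ) (hα : 1 ≤ α)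
    (hne : ¬(lam = (p : ℤ) - 1 ∧ α = 1))
    (T1 T2 : ℝ)
    (hT1 : T1 = ((lam : ℝ) - Real.sqrt ((lam : ℝ)^2 + 4 * (p : ℝ)^α)) / 2)
    (hT2 : T2 = ((lam : ℝ) + Real.sqrt ((lam : ℝ)^2 + 4 * (p : ℝ)^α)) / 2)
    (U W : ℕ → ℝ)
    (hU0 : U 0 = 1) (hU1 : U 1 = (lam : ℝ))
    (hW0 : W 0 = 0) (hW1 : W 1 = 1)
    (hUrec : ∀ n : ℕ, 1 ≤ n → U (n + 1) = (lam : ℝ) * U n + (p : ℝ)^α * U (n - 1))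
    (hWrec : ∀ n : ℕ, 1 ≤ n → W (n + 1) = (lam : ℝ) * W n + (p : ℝ)^α * W (n - 1))
    (k : ℕ) (hk : 1 ≤ k) (a b θ : ℝ)
    (ha : a = U k - (p : ℝ)^α * U (k - 1))
    (hb : b = W k - (p : ℝ)^α * W (k - 1))
    (hθ : θ = ((T1 - (p : ℝ)^α) * (a - b * T1)) / ((T2 - (p : ℝ)^α) * (a - b * T2))) :
    (k : ℤ) = ⌊Real.log |θ| / Real.log |T2 / T1|⌋ + 1 := by
  set P : ℝ := (p : ℝ)^α with hP
  have hpne2 : p ≠ 2 := by rintro rfl; exact (by decide : ¬ Odd 2) hodd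
  have hp3 : (3 : ℕ) ≤ p := by have := hp.two_le; omega
  have hpR : (3 : ℝ) ≤ (p : ℝ) := by exact_mod_cast hp3
  have hlamR : (1 : ℝ) ≤ (lam : ℝ) := by exact_mod_cast hlam.1
  have hlamR2 : (lam : ℝ) ≤ (p : ℝ) - 1 := by
    exact_mod_cast hlam.2
  have hPp : (p : ℝ) ≤ P := le_self_pow₀ (by linarith) (by omega)
  have hPpos : 0 < P := by positivity
  set s : ℝ := Real.sqrt ((lam : ℝ)^2 + 4 * P) with hs
  have hs2 : s ^ 2 = (lam : ℝ)^2 + 4 * P := Real.sq_sqrt (by positivity)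
  have hspos : 0 < s := Real.sqrt_pos.mpr (by positivity)
  have hsgt : (lam : ℝ) < s := by nlinarith
  have hT2pos : 0 < T2 := by rw [hT2]; linarith
  have hT1neg : T1 < 0 := by rw [hT1]; linarith
  have hsum : T1 + T2 = (lam : ℝ) := by rw [hT1, hT2]; ring
  have hprod : T1 * T2 = -P := by rw [hT1, hT2]; linear_combination (-(1:ℝ)/4) * hs2
  have hroot1 : T1 ^ 2 = (lam : ℝ) * T1 + P := by linear_combination T1 * hsum - hprod
  have hroot2 : T2 ^ 2 = (lam : ℝ) * T2 + P := by linear_combination T2 * hsum - hprod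
  -- main induction
  have key : ∀ n : ℕ, (U n - T1 * W n = T2^n ∧ U n - T2 * W n = T1^n) ∧
      (U (n+1) - T1 * W (n+1) = T2^(n+1) ∧ U (n+1) - T2 * W (n+1) = T1^(n+1)) := by
    intro n
    induction n with
    | zero =>
      refine ⟨⟨?_, ?_⟩, ?_, ?_⟩ <;> simp [hU0, hU1, hW0, hW1] <;> linarith [hsum]
    | succ n ih =>
      refine ⟨ih.2, ?_, ?_⟩
      · have h1 := hUrec (n+1) (by omega)
        have h2 := hWrec (n+1) (by omega)
        simp only [Nat.add_sub_cancel] at h1 h2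
        rw [h1, h2]
        linear_combination (lam : ℝ) * ih.2.1 + P * ih.1.1 - T2^n * hroot2
      · have h1 := hUrec (n+1) (by omega)
        have h2 := hWrec (n+1) (by omega)
        simp only [Nat.add_sub_cancel] at h1 h2
        rw [h1, h2]
        linear_combination (lam : ℝ) * ih.2.2 + P * ih.1.2 - T1^n * hroot1
  obtain ⟨m, rfl⟩ : ∃ m, k = m + 1 := ⟨k - 1, by omega⟩
  have hkm : m + 1 - 1 = m := rfl
  have e1 : a - b * T1 = T2 ^ m * (T2 - P) := by
    rw [ha, hb, hkm]
    have A := (key m).2.1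
    have B := (key m).1.1
    linear_combination A - P * B
  have e2 : a - b * T2 = T1 ^ m * (T1 - P) := by
    rw [ha, hb, hkm]
    have A := (key m).2.2
    have B := (key m).1.2
    linear_combination A - P * B
  have hT1ne : T1 ≠ 0 := ne_of_lt hT1neg
  have hT1P : T1 - P ≠ 0 := by intro h; nlinarith
  have hT2P : T2 - P ≠ 0 := by
    intro h
    have hT2eq : T2 = P := by linarith
    have hPeq : P = (lam : ℝ) + 1 := by
      rw [hT2eq] at hroot2
      have h' : P * P = P * ((lam : ℝ) + 1) := by linear_combination hroot2
      exact mul_left_cancel₀ (ne_of_gt hPpos) h'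
    have hPle : P ≤ (p : ℝ) := by linarith
    have hPeqp : P = (p : ℝ) := le_antisymm hPle hPp
    have hα1 : α = 1 := by
      by_contra hα1
      have h2 : 2 ≤ α := by omega
      have : (p : ℝ)^2 ≤ P := pow_le_pow_right₀ (by linarith) h2
      nlinarith
    have hlameq : lam = (p : ℤ) - 1 := by
      have : (lam : ℝ) = (p : ℝ) - 1 := by rw [hPeq] at hPeqp; linarith
      exact_mod_cast this
    exact hne ⟨hlameq, hα1⟩
  have hθval : θ = (T2 / T1) ^ m := by
    rw [hθ, e1, e2, div_pow]
    field_simp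
  have habs : |θ| = |T2 / T1| ^ m := by rw [hθval, abs_pow]
  have hratio : 1 < |T2 / T1| := by
    rw [abs_div]
    rw [one_lt_div (abs_pos.mpr hT1ne)]
    rw [abs_of_pos hT2pos, abs_of_neg hT1neg]
    rw [hT1, hT2]; linarith
  have hlogpos : 0 < Real.log |T2 / T1| := Real.log_pos hratio
  have hlogθ : Real.log |θ| = m * Real.log |T2 / T1| := by
    rw [habs, Real.log_pow]
  rw [hlogθ]
  rw [mul_div_assoc, div_self (ne_of_gt hlogpos), mul_one]
  rw [Int.floor_natCast]
  push_cast; ring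
end

section
/- Let p be an odd prime and define integer sequences (p_n) and (q_n) by p_{−1} = 1, p₀ = p−1, q_{−1} = 0, q₀ = 1 and the common recurrence u_{n+1} = (p−1)·u_n + p·u_{n−1} for n ≥ 0. Then for every n ≥ 0 the p-adic absolute value satisfies |p_n/q_n + 1|_p = p^{−(n+1)}; consequently the convergents p_n/q_n of the stationary Schneider continued fraction (p−1) + p/((p−1) + p/((p−1) + p/…)) converge in ℚ_p to −1. -/
/-!
Both `p_n + q_n` and `q_n` solve the recurrence `u_{n+1} = (p-1) u_n + p u_{n-1}`, whose
characteristic polynomial `X² - (p-1) X - p = (X - p)(X + 1)` has the roots `p` and `-1`.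
The initial values make `p_n + q_n = p^{n+1}` exactly, and `q_n ≡ (-1)^n (mod p)`, so `q_n` is a
`p`-adic unit and `|p_n/q_n + 1|_p = |p^{n+1}/q_n|_p = p^{-(n+1)}`.
-/

open Filter Topology

theorem eq_mul_pow_of_linear_recurrence {R : Type*} [CommRing R] {a b r c : R} {u : ℕ → R}
    (hr : r ^ 2 = a * r + b) (h0 : u 0 = c) (h1 : u 1 = c * r)
    (hrec : ∀ n, u (n + 2) = a * u (n + 1) + b * u n) (n : ℕ) : u n = c * r ^ n := by
  induction n using Nat.twoStepInduction with
  | zero => simpa using h0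
  | one => simpa using h1
  | more n ih ih' =>
    rw [hrec, ih, ih']
    linear_combination (-(c * r ^ n)) * hr

theorem tendsto_zpow_neg_succ_nhds_zero {K : Type*} [Field K] [LinearOrder K]
    [IsStrictOrderedRing K] [Archimedean K] [TopologicalSpace K] [OrderTopology K] {x : K}
    (hx : 1 < x) : Tendsto (fun n : ℕ => x ^ (-((n : ℤ) + 1))) atTop (𝓝 0) := by
  have hx_inv : x⁻¹ < 1 := inv_lt_one_of_one_lt₀ hx
  refine ((tendsto_pow_atTop_nhds_zero_of_lt_one (by positivity) hx_inv).comp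
    (tendsto_add_atTop_nat 1)).congr fun n => ?_
  rw [Function.comp_apply, inv_pow, ← zpow_natCast, ← zpow_neg, Nat.cast_succ]

section padic

variable {p : ℕ} [Fact p.Prime]

theorem padicNorm_prime_pow_div_int (n : ℕ) {q : ℤ} (hq : ¬(p : ℤ) ∣ q) :
    padicNorm p ((p : ℚ) ^ n / q) = (p : ℚ) ^ (-(n : ℤ)) := by
  rw [padicNorm.div, IsAbsoluteValue.abv_pow (padicNorm p), padicNorm.padicNorm_p_of_prime,
    (padicNorm.int_eq_one_iff q).mpr hq, div_one, zpow_neg, zpow_natCast, inv_pow]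

theorem Padic.tendsto_coe_of_tendsto_padicNorm_sub {ι : Type*} {l : Filter ι} {x : ι → ℚ} {a : ℚ}
    (h : Tendsto (fun i => padicNorm p (x i - a)) l (𝓝 0)) :
    Tendsto (fun i => (x i : ℚ_[p])) l (𝓝 (a : ℚ_[p])) := by
  rw [tendsto_iff_norm_sub_tendsto_zero]
  have h_real := (Rat.continuous_coe_real.tendsto 0).comp h
  rw [Rat.cast_zero] at h_real
  refine h_real.congr fun i => ?_
  rw [Function.comp_apply, ← Padic.eq_padicNorm, Rat.cast_sub]

end padic

theorem stmt_15_general (p : ℕ) [hp : Fact p.Prime]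
    (P Q : ℕ → ℤ)
    (hP0 : P 0 = (p : ℤ) - 1) (hQ0 : Q 0 = 1)
    (hP1 : P 1 = ((p : ℤ) - 1) * P 0 + (p : ℤ) * 1)
    (hQ1 : Q 1 = ((p : ℤ) - 1) * Q 0 + (p : ℤ) * 0)
    (hPrec : ∀ n : ℕ, 1 ≤ n → P (n + 1) = ((p : ℤ) - 1) * P n + (p : ℤ) * P (n - 1))
    (hQrec : ∀ n : ℕ, 1 ≤ n → Q (n + 1) = ((p : ℤ) - 1) * Q n + (p : ℤ) * Q (n - 1)) :
    (∀ n : ℕ, padicNorm p ((P n : ℚ) / (Q n : ℚ) + 1) = (p : ℚ) ^ (-((n : ℤ) + 1))) ∧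
    Filter.Tendsto (fun n : ℕ => ((P n : ℚ_[p]) / (Q n : ℚ_[p]))) Filter.atTop
      (nhds (-1)) := by
  have hP2 (n : ℕ) : P (n + 2) = ((p : ℤ) - 1) * P (n + 1) + p * P n := hPrec (n + 1) (by omega)
  have hQ2 (n : ℕ) : Q (n + 2) = ((p : ℤ) - 1) * Q (n + 1) + p * Q n := hQrec (n + 1) (by omega)
  have hsum (n : ℕ) : P n + Q n = p * (p : ℤ) ^ n :=
    eq_mul_pow_of_linear_recurrence (u := fun n => P n + Q n) (a := (p : ℤ) - 1) (b := p)
      (by ring) (by rw [hP0, hQ0]; ring) (by rw [hP1, hQ1, hP0, hQ0]; ring)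
      (fun n => by simp only [hP2, hQ2]; ring) n
  have hQmod (n : ℕ) : (Q n : ZMod p) = 1 * (-1 : ZMod p) ^ n :=
    eq_mul_pow_of_linear_recurrence (u := fun n => (Q n : ZMod p))
      (a := (p : ZMod p) - 1) (b := p)
      (by ring) (by simp [hQ0]) (by simp [hQ1, hQ0])
      (fun n => by simp only [hQ2]; push_cast; ring) n
  have hQ_unit (n : ℕ) : ¬(p : ℤ) ∣ Q n := by
    rw [← ZMod.intCast_zmod_eq_zero_iff_dvd, hQmod]
    simp
  have hnorm (n : ℕ) : padicNorm p ((P n : ℚ) / Q n + 1) = (p : ℚ) ^ (-((n : ℤ) + 1)) := by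
    have hQ : (Q n : ℚ) ≠ 0 := Int.cast_ne_zero.mpr fun h => hQ_unit n (h ▸ dvd_zero _)
    have hs : (P n : ℚ) + Q n = (p : ℚ) ^ (n + 1) := by rw [pow_succ']; exact_mod_cast hsum n
    rw [div_add_one hQ, hs, padicNorm_prime_pow_div_int _ (hQ_unit n), Nat.cast_succ]
  refine ⟨hnorm, ?_⟩
  have hnorm_lim : Tendsto (fun n => padicNorm p ((P n : ℚ) / Q n - (-1))) atTop (𝓝 0) := by
    simpa only [sub_neg_eq_add, hnorm] using
      tendsto_zpow_neg_succ_nhds_zero (K := ℚ) (mod_cast hp.out.one_lt)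
  simpa using Padic.tendsto_coe_of_tendsto_padicNorm_sub hnorm_lim

/-- For the convergents `p_n/q_n` of the stationary Schneider continued fraction
`(p−1) + p/((p−1) + p/(…))`, the `p`-adic absolute value satisfies
`|p_n/q_n + 1|_p = p^{−(n+1)}`; consequently the convergents tend to `−1`
in `ℚ_p`. -/
theorem stmt_15 (p : ℕ) [hp : Fact p.Prime] (hodd : Odd p)
    (P Q : ℕ → ℤ)
    (hP0 : P 0 = (p : ℤ) - 1) (hQ0 : Q 0 = 1)
    (hP1 : P 1 = ((p : ℤ) - 1) * P 0 + (p : ℤ) * 1)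
    (hQ1 : Q 1 = ((p : ℤ) - 1) * Q 0 + (p : ℤ) * 0)
    (hPrec : ∀ n : ℕ, 1 ≤ n → P (n + 1) = ((p : ℤ) - 1) * P n + (p : ℤ) * P (n - 1))
    (hQrec : ∀ n : ℕ, 1 ≤ n → Q (n + 1) = ((p : ℤ) - 1) * Q n + (p : ℤ) * Q (n - 1)) :
    (∀ n : ℕ, padicNorm p ((P n : ℚ) / (Q n : ℚ) + 1) = (p : ℚ) ^ (-((n : ℤ) + 1))) ∧
    Filter.Tendsto (fun n : ℕ => ((P n : ℚ_[p]) / (Q n : ℚ_[p]))) Filter.atTop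
      (nhds (-1)) :=
  stmt_15_general p (hp := hp) P Q hP0 hQ0 hP1 hQ1 hPrec hQrec
end
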